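/- arXiv:2308.08086 — 3 statements merged into one kernel-verified Lean document; each statement's English description precedes it below -/
import Mathlib

section
/- Let D_lo, D_hi ∈ ℝ^{n×p}, d_lo, d_hi ∈ ℝⁿ, σ_w ≥ 0, y ∈ ℝᵖ, matrices Φ_1,…,Φ_t ∈ ℝ^{p×n} and Ψ_1,…,Ψ_t ∈ ℝ^{n×n}, and ψ ∈ ℝⁿ with ψ_i > 0. Suppose for every i: σ_w + e_iᵀ(D_hi y + d_hi) + Σ_{j=1}^t ‖e_iᵀ(D_hi Φ_j − Ψ_j)‖₁ ≤ ψ_i and σ_w − e_iᵀ(D_lo y + d_lo) + Σ_{j=1}^t ‖e_iᵀ(D_lo Φ_j − Ψ_j)‖₁ ≤ ψ_i. Then for all w̃_1,…,w̃_t ∈ ℝⁿ with ‖w̃_j‖_∞ ≤ 1, all w ∈ ℝⁿ with ‖w‖_∞ ≤ σ_w, and all Δ ∈ ℝⁿ satisfying D_lo (y + Σ_j Φ_j w̃_j) + d_lo ≤ Δ ≤ D_hi (y + Σ_j Φ_j w̃_j) + d_hi, there exists w̃ ∈ ℝⁿ with ‖w̃‖_∞ ≤ 1 such that Δ + w = Σ_{j=1}^t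 Ψ_j w̃_j + diag(ψ) w̃. -/
/-!
Splitting `D (y + ∑ Φⱼ w̃ⱼ) = D y + ∑ (D Φⱼ - Ψⱼ) w̃ⱼ + ∑ Ψⱼ w̃ⱼ` and bounding each
`(D Φⱼ - Ψⱼ) w̃ⱼ` row-wise by the `ℓ₁`-norm of the row, the two hypotheses give that the
residual `r = Δ + w - ∑ Ψⱼ w̃ⱼ` satisfies `|rᵢ| ≤ ψᵢ`; then `w̃ᵢ = rᵢ / ψᵢ` is the required vector.
-/

open Matrix

section

variable {R : Type*} {m n p ι : Type*}

theorem mulVec_add_sum_mulVec_eq [Ring R] [Fintype n] [Fintype p] [Fintype ι]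
    (D : Matrix m p R) (y : p → R) (Φ : ι → Matrix p n R) (Ψ : ι → Matrix m n R)
    (x : ι → n → R) :
    D *ᵥ (y + ∑ j, Φ j *ᵥ x j)
      = D *ᵥ y + ∑ j, (D * Φ j - Ψ j) *ᵥ x j + ∑ j, Ψ j *ᵥ x j := by
  simp only [mulVec_add, mulVec_sum, mulVec_mulVec, sub_mulVec, Finset.sum_sub_distrib]
  abel

variable [LinearOrder R]

theorem abs_mulVec_apply_le_sum_abs [Ring R] [IsStrictOrderedRing R] [Fintype n]
    (M : Matrix m n R) {v : n → R} (hv : ∀ l, |v l| ≤ 1) (i : m) :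
    |(M *ᵥ v) i| ≤ ∑ l, |M i l| :=
  calc |(M *ᵥ v) i| ≤ ∑ l, |M i l * v l| := Finset.abs_sum_le_sum_abs _ _
    _ ≤ ∑ l, |M i l| := Finset.sum_le_sum fun l _ => by
        rw [abs_mul]
        exact mul_le_of_le_one_right (abs_nonneg _) (hv l)

theorem abs_sum_mulVec_apply_le [Ring R] [IsStrictOrderedRing R] [Fintype n] [Fintype ι]
    (M : ι → Matrix m n R) {x : ι → n → R} (hx : ∀ j l, |x j l| ≤ 1) (i : m) :
    |(∑ j, M j *ᵥ x j) i| ≤ ∑ j, ∑ l, |M j i l| := by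
  rw [Finset.sum_apply]
  exact (Finset.abs_sum_le_sum_abs _ _).trans
    (Finset.sum_le_sum fun j _ => abs_mulVec_apply_le_sum_abs _ (hx j) i)

theorem exists_abs_le_one_eq_diagonal_mulVec [Field R] [IsStrictOrderedRing R] [Fintype m]
    [DecidableEq m] {r ψ : m → R} (h : ∀ i, |r i| ≤ ψ i) :
    ∃ w : m → R, (∀ i, |w i| ≤ 1) ∧ r = diagonal ψ *ᵥ w := by
  refine ⟨fun i => r i / ψ i, fun i => ?_, funext fun i => ?_⟩
  · rw [abs_div]
    exact div_le_one_of_le₀ ((h i).trans (le_abs_self _)) (abs_nonneg _)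
  · rw [mulVec_diagonal]
    rcases eq_or_ne (ψ i) 0 with hψ | hψ
    · simpa [hψ] using h i
    · exact (mul_div_cancel₀ _ hψ).symm

end

theorem stmt_5_general {n p t : ℕ} (D_lo D_hi : Matrix (Fin n) (Fin p) ℝ)
    (d_lo d_hi : Fin n → ℝ) (σw : ℝ) (y : Fin p → ℝ)
    (Φ : Fin t → Matrix (Fin p) (Fin n) ℝ) (Ψ : Fin t → Matrix (Fin n) (Fin n) ℝ)
    (ψ : Fin n → ℝ)
    (h1 : ∀ i, σw + (D_hi.mulVec y + d_hi) i
        + ∑ j, ∑ l, |(Matrix.vecMul (Pi.single i 1) (D_hi * Φ j - Ψ j)) l| ≤ ψ i)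
    (h2 : ∀ i, σw - (D_lo.mulVec y + d_lo) i
        + ∑ j, ∑ l, |(Matrix.vecMul (Pi.single i 1) (D_lo * Φ j - Ψ j)) l| ≤ ψ i) :
    ∀ wt : Fin t → Fin n → ℝ, (∀ j l, |wt j l| ≤ 1) →
    ∀ w : Fin n → ℝ, (∀ i, |w i| ≤ σw) →
    ∀ Δ : Fin n → ℝ,
      (∀ i, (D_lo.mulVec (y + ∑ j, (Φ j).mulVec (wt j)) + d_lo) i ≤ Δ i ∧
            Δ i ≤ (D_hi.mulVec (y + ∑ j, (Φ j).mulVec (wt j)) + d_hi) i) →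
      ∃ w' : Fin n → ℝ, (∀ i, |w' i| ≤ 1) ∧
        Δ + w = ∑ j, (Ψ j).mulVec (wt j) + (Matrix.diagonal ψ).mulVec w' := by
  intro wt hwt w hw Δ hΔ
  simp only [single_one_vecMul, row_apply, Pi.add_apply] at h1 h2
  have hres : ∀ i, |(Δ + w - ∑ j, Ψ j *ᵥ wt j) i| ≤ ψ i := fun i => by
    have hsplit (D : Matrix (Fin n) (Fin p) ℝ) :=
      congrFun (mulVec_add_sum_mulVec_eq D y Φ Ψ wt) i
    have hrow (D : Matrix (Fin n) (Fin p) ℝ) :=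
      abs_le.mp (abs_sum_mulVec_apply_le (fun j => D * Φ j - Ψ j) hwt i)
    simp only [Pi.add_apply, Pi.sub_apply] at hsplit hΔ ⊢
    rw [abs_le]
    constructor <;> linarith [h1 i, h2 i, hΔ i, abs_le.mp (hw i), hsplit D_lo, hsplit D_hi,
      hrow D_lo, hrow D_hi]
  obtain ⟨w', hw', hr⟩ := exists_abs_le_one_eq_diagonal_mulVec hres
  exact ⟨w', hw', by rw [← hr]; abel⟩

theorem stmt_5 {n p t : ℕ} (D_lo D_hi : Matrix (Fin n) (Fin p) ℝ)
    (d_lo d_hi : Fin n → ℝ) (σw : ℝ) (hσ : 0 ≤ σw) (y : Fin p → ℝ)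
    (Φ : Fin t → Matrix (Fin p) (Fin n) ℝ) (Ψ : Fin t → Matrix (Fin n) (Fin n) ℝ)
    (ψ : Fin n → ℝ) (hψ : ∀ i, 0 < ψ i)
    (h1 : ∀ i, σw + (D_hi.mulVec y + d_hi) i
        + ∑ j, ∑ l, |(Matrix.vecMul (Pi.single i 1) (D_hi * Φ j - Ψ j)) l| ≤ ψ i)
    (h2 : ∀ i, σw - (D_lo.mulVec y + d_lo) i
        + ∑ j, ∑ l, |(Matrix.vecMul (Pi.single i 1) (D_lo * Φ j - Ψ j)) l| ≤ ψ i) :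
    ∀ wt : Fin t → Fin n → ℝ, (∀ j l, |wt j l| ≤ 1) →
    ∀ w : Fin n → ℝ, (∀ i, |w i| ≤ σw) →
    ∀ Δ : Fin n → ℝ,
      (∀ i, (D_lo.mulVec (y + ∑ j, (Φ j).mulVec (wt j)) + d_lo) i ≤ Δ i ∧
            Δ i ≤ (D_hi.mulVec (y + ∑ j, (Φ j).mulVec (wt j)) + d_hi) i) →
      ∃ w' : Fin n → ℝ, (∀ i, |w' i| ≤ 1) ∧
        Δ + w = ∑ j, (Ψ j).mulVec (wt j) + (Matrix.diagonal ψ).mulVec w' :=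
  stmt_5_general D_lo D_hi d_lo d_hi σw y Φ Ψ ψ h1 h2
end

section
/- Let Z, A, B, K be matrices of compatible dimensions such that Z(A + BK) is nilpotent. Define Φ_x = (I − Z(A+BK))^{-1} and Φ_u = K Φ_x. Then (I − ZA)Φ_x − ZB Φ_u = I. -/
open Matrix

theorem Matrix.one_sub_mul_sub_mul_mul_eq {l m p R : Type*} [Fintype l] [DecidableEq l]
    [Fintype m] [Ring R] (Z A : Matrix l l R) (B : Matrix l m R) (K : Matrix m l R)
    (X : Matrix l p R) :
    (1 - Z * A) * X - Z * B * (K * X) = (1 - Z * (A + B * K)) * X := by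
  simp only [Matrix.mul_add, Matrix.sub_mul, Matrix.add_mul, Matrix.mul_assoc]
  abel

theorem stmt_7 {n m : ℕ} (Z A : Matrix (Fin n) (Fin n) ℝ)
    (B : Matrix (Fin n) (Fin m) ℝ) (K : Matrix (Fin m) (Fin n) ℝ)
    (hnil : IsNilpotent (Z * (A + B * K))) :
    (1 - Z * A) * (1 - Z * (A + B * K))⁻¹
      - Z * B * (K * (1 - Z * (A + B * K))⁻¹) = 1 := by
  have hunit : IsUnit (1 - Z * (A + B * K)) := hnil.isUnit_one_sub
  rw [Matrix.one_sub_mul_sub_mul_mul_eq,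
    Matrix.mul_nonsing_inv _ ((Matrix.isUnit_iff_isUnit_det _).mp hunit)]
end

section
/- Let A, B, Z be matrices with Z A and Z B of compatible dimension, and suppose Φ_x, Φ_u satisfy (I − ZA)Φ_x − ZB Φ_u = I with Φ_x invertible. Define K = Φ_u Φ_x^{-1}. Then (I − Z(A + BK)) Φ_x = I, i.e., Φ_x = (I − Z(A+BK))^{-1} and Φ_u = K(I − Z(A+BK))^{-1}. -/
open Matrix

theorem Matrix.one_sub_mul_add_mul_inv_mul_eq_one {R : Type*} [CommRing R]
    {n m : Type*} [Fintype n] [DecidableEq n] [Fintype m]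
    (Z A : Matrix n n R) (B : Matrix n m R) (X : Matrix n n R) (U : Matrix m n R)
    [Invertible X] (h : (1 - Z * A) * X - Z * B * U = 1) :
    (1 - Z * (A + B * (U * X⁻¹))) * X = 1 := by
  calc (1 - Z * (A + B * (U * X⁻¹))) * X
      = (1 - Z * A) * X - Z * B * (U * X⁻¹ * X) := by
        simp only [sub_mul, mul_add, add_mul, one_mul, Matrix.mul_assoc]
        abel
    _ = 1 := by rw [inv_mul_cancel_right_of_invertible, h]

theorem stmt_8 {n m : ℕ} (Z A : Matrix (Fin n) (Fin n) ℝ)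
    (B : Matrix (Fin n) (Fin m) ℝ)
    (Φx : Matrix (Fin n) (Fin n) ℝ) (Φu : Matrix (Fin m) (Fin n) ℝ)
    (hconstr : (1 - Z * A) * Φx - Z * B * Φu = 1)
    (hinv : Invertible Φx) :
    (1 - Z * (A + B * (Φu * Φx⁻¹))) * Φx = 1 ∧
      Φx = (1 - Z * (A + B * (Φu * Φx⁻¹)))⁻¹ ∧
      Φu = (Φu * Φx⁻¹) * (1 - Z * (A + B * (Φu * Φx⁻¹)))⁻¹ := by
  have hclosed := one_sub_mul_add_mul_inv_mul_eq_one Z A B Φx Φu hconstr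
  have hΦx : (1 - Z * (A + B * (Φu * Φx⁻¹)))⁻¹ = Φx := inv_eq_right_inv hclosed
  exact ⟨hclosed, hΦx.symm, by rw [hΦx, inv_mul_cancel_right_of_invertible]⟩
end
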